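/- With notation as above, the bijection σ ↦ f_w ∘ σ restricts to a bijection between the n-stable minimal-length coset representatives (those σ with no inversion (i, i+n), i.e., σ(x) < σ(x+n) for all x) and the n-stable (m,r)-affine compositions of weight w (those f with f(x) ≤ f(x+n) for all x). -/

import Mathlib

/-- An affine permutation of period `m`: a bijection `σ : ℤ → ℤ` with
`σ(x+m) = σ(x)+m` and `σ(1)+⋯+σ(m) = m(m+1)/2`. -/
def IsAffinePerm (m : ℕ) (σ : ℤ → ℤ) : Prop :=
  Function.Bijective σ ∧ (∀ x : ℤ, σ (x + m) = σ x + m) ∧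
    2 * (∑ x ∈ Finset.Icc (1 : ℤ) m, σ x) = m * (m + 1)

/-- An `(m,r)`-affine composition: `f : ℤ → ℤ` with `f(x+m) = f(x)+r`, whose
preimage of `[1,r]` has exactly `m` elements, pairwise distinct modulo `m`,
summing to `m(m+1)/2`. -/
def IsAffineComp (m r : ℕ) (f : ℤ → ℤ) : Prop :=
  (∀ x : ℤ, f (x + m) = f x + r) ∧
  ∃ s : Finset ℤ,
    (∀ x : ℤ, x ∈ s ↔ 1 ≤ f x ∧ f x ≤ r) ∧
    s.card = m ∧
    (∀ x ∈ s, ∀ y ∈ s, x % m = y % m → x = y) ∧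
    2 * (∑ x ∈ s, x) = m * (m + 1)

lemma per_mul {g : ℤ → ℤ} {p q : ℤ} (h : ∀ x, g (x + p) = g x + q) :
    ∀ (k : ℤ) (x : ℤ), g (x + k * p) = g x + k * q := by
  have h' : ∀ x, g (x - p) = g x - q := by
    intro x
    have := h (x - p)
    rw [sub_add_cancel] at this
    omega
  intro k
  induction k using Int.induction_on with
  | zero => simp
  | succ k ih =>
    intro x
    have e : x + ((k : ℤ) + 1) * p = (x + k * p) + p := by ring
    rw [e, h, ih]; ring
  | pred k ih =>
    intro x
    have e : x + (-(k : ℤ) - 1) * p = (x + (-(k:ℤ)) * p) - p := by ring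
    rw [e, h', ih]; ring

lemma gauss (m : ℕ) : 2 * ∑ x ∈ Finset.Icc (1 : ℤ) m, x = m * (m + 1) := by
  induction m with
  | zero => simp
  | succ k ih =>
    have e : Finset.Icc (1 : ℤ) ((k : ℕ) + 1 : ℕ) = insert ((k:ℤ)+1) (Finset.Icc (1:ℤ) k) := by
      ext z
      simp only [Finset.mem_Icc, Finset.mem_insert]
      push_cast
      omega
    rw [e, Finset.sum_insert (by simp)]
    push_cast
    push_cast at ih
    nlinarith [ih]

lemma rank_formula {A : Finset ℤ} {φ : ℤ → ℤ} {a b : ℤ}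
    (hcard : A.card = (Finset.Ioc a b).card)
    (hmaps : ∀ y ∈ A, φ y ∈ Finset.Ioc a b)
    (hmono : ∀ y ∈ A, ∀ z ∈ A, y < z → φ y < φ z) :
    ∀ y ∈ A, φ y = a + ((A.filter (fun z => z ≤ y)).card : ℤ) := by
  have hinj : Set.InjOn φ ↑A := by
    intro y hy z hz hφ
    rcases lt_trichotomy y z with h|h|h
    · exact absurd hφ (ne_of_lt (hmono y hy z hz h))
    · exact h
    · exact absurd hφ.symm (ne_of_lt (hmono z hz y hy h))
  have himg : A.image φ = Finset.Ioc a b := by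
    apply Finset.eq_of_subset_of_card_le
    · intro u hu
      rcases Finset.mem_image.mp hu with ⟨y, hy, rfl⟩
      exact hmaps y hy
    · rw [Finset.card_image_of_injOn hinj, hcard]
  intro y hy
  have hy' := Finset.mem_Ioc.mp (hmaps y hy)
  have h1 : (Finset.Ioc a b).filter (fun u => u ≤ φ y) = (A.filter (fun z => z ≤ y)).image φ := by
    ext u
    simp only [Finset.mem_filter, Finset.mem_image, Finset.mem_Ioc]
    constructor
    · rintro ⟨hu1, hu2⟩
      have hu3 : u ∈ A.image φ := by rw [himg]; exact Finset.mem_Ioc.mpr hu1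
      rcases Finset.mem_image.mp hu3 with ⟨z, hz, rfl⟩
      refine ⟨z, ⟨hz, ?_⟩, rfl⟩
      by_contra h
      push_neg at h
      exact absurd hu2 (not_le.mpr (hmono y hy z hz h))
    · rintro ⟨z, ⟨hz, hzy⟩, rfl⟩
      refine ⟨Finset.mem_Ioc.mp (hmaps z hz), ?_⟩
      rcases eq_or_lt_of_le hzy with h|h
      · subst h; exact le_rfl
      · exact le_of_lt (hmono z hz y hy h)
  have h2 : (Finset.Ioc a b).filter (fun u => u ≤ φ y) = Finset.Ioc a (φ y) := by
    ext u
    simp only [Finset.mem_filter, Finset.mem_Ioc]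
    omega
  have hc : ((A.filter (fun z => z ≤ y)).card : ℤ) = φ y - a := by
    have hinj' : Set.InjOn φ ↑(A.filter (fun z => z ≤ y)) :=
      hinj.mono (by intro z hz; exact Finset.mem_coe.mpr (Finset.mem_filter.mp (Finset.mem_coe.mp hz)).1)
    have := Finset.card_image_of_injOn hinj'
    rw [← h1, h2] at this
    rw [← this, Int.card_Ioc]
    exact Int.toNat_of_nonneg (by omega)
  omega

noncomputable section

def Wn {r : ℕ} (w : Fin r → ℕ) (i : ℕ) : ℤ :=
  ∑ j ∈ Finset.univ.filter (fun j : Fin r => j.val < i), (w j : ℤ)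

lemma Wn_zero {r : ℕ} (w : Fin r → ℕ) : Wn w 0 = 0 := by simp [Wn]

lemma Wn_succ {r : ℕ} (w : Fin r → ℕ) {i : ℕ} (hi : i < r) :
    Wn w (i + 1) = Wn w i + w ⟨i, hi⟩ := by
  unfold Wn
  have e : Finset.univ.filter (fun j : Fin r => j.val < i + 1) =
      insert ⟨i, hi⟩ (Finset.univ.filter (fun j : Fin r => j.val < i)) := by
    ext j
    simp only [Finset.mem_filter, Finset.mem_univ, true_and, Finset.mem_insert, Fin.ext_iff]
    omega
  rw [e, Finset.sum_insert (by simp)]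
  ring

lemma Wn_mono {r : ℕ} (w : Fin r → ℕ) {i j : ℕ} (hij : i ≤ j) : Wn w i ≤ Wn w j := by
  apply Finset.sum_le_sum_of_subset_of_nonneg
  · intro x hx
    simp only [Finset.mem_filter, Finset.mem_univ, true_and] at *
    omega
  · intro x _ _
    positivity

lemma Wn_nonneg {r : ℕ} (w : Fin r → ℕ) (i : ℕ) : 0 ≤ Wn w i := by
  rw [← Wn_zero w]
  exact Wn_mono w (Nat.zero_le i)

lemma Wn_top {r m : ℕ} {w : Fin r → ℕ} (hw : (∑ i, w i) = m) {i : ℕ} (hi : r ≤ i) :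
    Wn w i = m := by
  unfold Wn
  have e : Finset.univ.filter (fun j : Fin r => j.val < i) = Finset.univ := by
    ext j
    simp only [Finset.mem_filter, Finset.mem_univ, true_and, iff_true]
    omega
  rw [e, ← hw]
  push_cast
  rfl

section FW

variable {m r : ℕ} {w : Fin r → ℕ} {fw : ℤ → ℤ}

lemma fwv (hfw_val : ∀ i : Fin r, ∀ x : ℤ,
      (∑ j ∈ Finset.univ.filter (fun j : Fin r => j.val < i.val), (w j : ℤ)) < x →
      x ≤ (∑ j ∈ Finset.univ.filter (fun j : Fin r => j.val ≤ i.val), (w j : ℤ)) →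
      fw x = i.val + 1)
    (i : Fin r) (x : ℤ) (h1 : Wn w i.val < x) (h2 : x ≤ Wn w (i.val + 1)) :
    fw x = i.val + 1 := by
  apply hfw_val i x h1
  have e : Finset.univ.filter (fun j : Fin r => j.val ≤ i.val) =
      Finset.univ.filter (fun j : Fin r => j.val < i.val + 1) := by
    ext j; simp [Nat.lt_succ_iff]
  rw [e]
  exact h2

lemma exists_interval (hr : 0 < r) (hw : (∑ i, w i) = m) (x : ℤ)
    (h1 : 0 < x) (h2 : x ≤ m) :
    ∃ i : Fin r, Wn w i.val < x ∧ x ≤ Wn w (i.val + 1) := by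
  have hex : ∃ i : ℕ, x ≤ Wn w (i + 1) := by
    refine ⟨r - 1, ?_⟩
    rw [Nat.sub_add_cancel hr, Wn_top hw le_rfl]
    exact h2
  classical
  let i₀ := Nat.find hex
  have hi₀r : i₀ < r := by
    have : i₀ ≤ r - 1 := Nat.find_le (by
      rw [Nat.sub_add_cancel hr, Wn_top hw le_rfl]; exact h2)
    omega
  have hlow : Wn w i₀ < x := by
    cases hi : i₀ with
    | zero => rw [Wn_zero]; exact h1
    | succ j =>
      have hmin : ¬ (x ≤ Wn w (j + 1)) := Nat.find_min hex (by omega)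
      omega
  exact ⟨⟨i₀, hi₀r⟩, hlow, Nat.find_spec hex⟩

lemma fw_window (hr : 0 < r) (hw : (∑ i, w i) = m)
    (hfw_val : ∀ i : Fin r, ∀ x : ℤ,
      (∑ j ∈ Finset.univ.filter (fun j : Fin r => j.val < i.val), (w j : ℤ)) < x →
      x ≤ (∑ j ∈ Finset.univ.filter (fun j : Fin r => j.val ≤ i.val), (w j : ℤ)) →
      fw x = i.val + 1)
    (x : ℤ) (h1 : 0 < x) (h2 : x ≤ m) : 1 ≤ fw x ∧ fw x ≤ r := by
  obtain ⟨i, hi1, hi2⟩ := exists_interval hr hw x h1 h2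
  rw [fwv hfw_val i x hi1 hi2]
  have := i.isLt
  omega

lemma decomp (hm : 0 < m) (x : ℤ) :
    ∃ (k y : ℤ), x = y + k * m ∧ 0 < y ∧ y ≤ m := by
  refine ⟨(x - 1) / m, (x - 1) % m + 1, ?_, ?_, ?_⟩
  · have h1 := Int.mul_ediv_add_emod (x - 1) m
    have h2 : ((m : ℤ)) * ((x-1)/m) = ((x-1)/m) * m := mul_comm _ _
    linarith
  · have := Int.emod_nonneg (x - 1) (by exact_mod_cast hm.ne' : (m:ℤ) ≠ 0)
    omega
  · have := Int.emod_lt_of_pos (x - 1) (by exact_mod_cast hm : (0:ℤ) < m)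
    omega

variable (hm : 0 < m) (hr : 0 < r) (hw : (∑ i, w i) = m)
variable (hfw_per : ∀ x : ℤ, fw (x + m) = fw x + r)
variable (hfw_val : ∀ i : Fin r, ∀ x : ℤ,
      (∑ j ∈ Finset.univ.filter (fun j : Fin r => j.val < i.val), (w j : ℤ)) < x →
      x ≤ (∑ j ∈ Finset.univ.filter (fun j : Fin r => j.val ≤ i.val), (w j : ℤ)) →
      fw x = i.val + 1)

include hm hr hw hfw_per hfw_val

lemma fw_window_iff (x : ℤ) : (1 ≤ fw x ∧ fw x ≤ r) ↔ (0 < x ∧ x ≤ m) := by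
  constructor
  · rintro ⟨h1, h2⟩
    obtain ⟨k, y, rfl, hy1, hy2⟩ := decomp hm x
    have hval := per_mul hfw_per k y
    have hwin := fw_window hr hw hfw_val y hy1 hy2
    have hk : k = 0 := by
      rcases lt_trichotomy k 0 with h|h|h
      · have : k * r ≤ (-1) * r := mul_le_mul_of_nonneg_right (by omega) (by positivity)
        omega
      · exact h
      · have : 1 * r ≤ k * r := mul_le_mul_of_nonneg_right (by omega) (by positivity)
        omega
    subst hk
    simpa using And.intro hy1 hy2
  · rintro ⟨h1, h2⟩
    exact fw_window hr hw hfw_val x h1 h2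

lemma fw_mono_window {x y : ℤ} (hx1 : 0 < x) (hxy : x ≤ y) (hy2 : y ≤ m) :
    fw x ≤ fw y := by
  obtain ⟨i, hi1, hi2⟩ := exists_interval hr hw x hx1 (le_trans hxy hy2)
  obtain ⟨j, hj1, hj2⟩ := exists_interval hr hw y (lt_of_lt_of_le hx1 hxy) hy2
  rw [fwv hfw_val i x hi1 hi2, fwv hfw_val j y hj1 hj2]
  have hij : i.val ≤ j.val := by
    by_contra h
    push_neg at h
    have : Wn w (j.val + 1) ≤ Wn w i.val := Wn_mono w (by omega)
    omega
  omega

lemma fw_mono : ∀ x y : ℤ, x ≤ y → fw x ≤ fw y := by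
  intro x y hxy
  obtain ⟨k, x₀, rfl, hx1, hx2⟩ := decomp hm x
  obtain ⟨l, y₀, rfl, hy1, hy2⟩ := decomp hm y
  rw [per_mul hfw_per k x₀, per_mul hfw_per l y₀]
  have hwx := fw_window hr hw hfw_val x₀ hx1 hx2
  have hwy := fw_window hr hw hfw_val y₀ hy1 hy2
  rcases lt_trichotomy k l with h|h|h
  · have h1 : (k + 1) * r ≤ l * r := mul_le_mul_of_nonneg_right (by omega) (by positivity)
    nlinarith
  · subst h
    have hxy0 : x₀ ≤ y₀ := by omega
    have := fw_mono_window hm hr hw hfw_per hfw_val hx1 hxy0 hy2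
    omega
  · exfalso
    have h1 : (l + 1) * m ≤ k * m := mul_le_mul_of_nonneg_right (by omega) (by positivity)
    nlinarith

lemma fw_fiber_iff (i : Fin r) (x : ℤ) :
    fw x = i.val + 1 ↔ (Wn w i.val < x ∧ x ≤ Wn w (i.val + 1)) := by
  constructor
  · intro h
    have hwin : 0 < x ∧ x ≤ m := by
      apply (fw_window_iff hm hr hw hfw_per hfw_val x).mp
      rw [h]
      have := i.isLt
      omega
    obtain ⟨j, hj1, hj2⟩ := exists_interval hr hw x hwin.1 hwin.2
    have hj := fwv hfw_val j x hj1 hj2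
    have hij : i.val = j.val := by omega
    rw [hij]
    exact ⟨hj1, hj2⟩
  · intro ⟨h1, h2⟩
    exact fwv hfw_val i x h1 h2

end FW

set_option linter.unusedSectionVars false

def Kf (r : ℕ) (f : ℤ → ℤ) (x : ℤ) : ℤ := (f x - 1) / r

def Rf (f : ℤ → ℤ) (s : Finset ℤ) (y : ℤ) : ℤ :=
  ((s.filter (fun z => f z < f y ∨ (f z = f y ∧ z ≤ y))).card : ℤ)

def sigmaF (m r : ℕ) (f : ℤ → ℤ) (s : Finset ℤ) (x : ℤ) : ℤ :=
  Rf f s (x - Kf r f x * m) + Kf r f x * m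

section Comp

variable {m r : ℕ} {w : Fin r → ℕ} {f : ℤ → ℤ} {s : Finset ℤ}

variable (hm : 0 < m) (hr : 0 < r)
variable (hf_per : ∀ x : ℤ, f (x + m) = f x + r)
variable (hs_mem : ∀ x : ℤ, x ∈ s ↔ 1 ≤ f x ∧ f x ≤ r)
variable (hs_card : s.card = m)
variable (hs_dist : ∀ x ∈ s, ∀ y ∈ s, x % m = y % m → x = y)
variable (hs_sum : 2 * (∑ x ∈ s, x) = m * (m + 1))
variable (hwt : ∀ i : Fin r, Set.ncard {x : ℤ | f x = i.val + 1} = w i)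

include hr hf_per in
lemma f_x0 (x : ℤ) : f (x - Kf r f x * m) = f x - Kf r f x * r := by
  have e : x - Kf r f x * m = x + (-(Kf r f x)) * m := by ring
  rw [e, per_mul hf_per (-(Kf r f x)) x]
  ring

include hr in
lemma Kf_spec (x : ℤ) : 1 ≤ f x - Kf r f x * r ∧ f x - Kf r f x * r ≤ r := by
  have h1 := Int.mul_ediv_add_emod (f x - 1) r
  have h2 := Int.emod_nonneg (f x - 1) (by exact_mod_cast hr.ne' : (r:ℤ) ≠ 0)
  have h3 := Int.emod_lt_of_pos (f x - 1) (by exact_mod_cast hr : (0:ℤ) < r)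
  have h4 : (r:ℤ) * ((f x - 1) / r) = ((f x - 1) / r) * r := mul_comm _ _
  unfold Kf
  constructor <;> linarith

include hm hr hf_per hs_mem in
lemma x0_mem (x : ℤ) : x - Kf r f x * m ∈ s := by
  rw [hs_mem, f_x0 hr hf_per x]
  exact Kf_spec hr x

include hr hf_per in
lemma Kf_add (k x : ℤ) : Kf r f (x + k * m) = Kf r f x + k := by
  unfold Kf
  rw [per_mul hf_per k x]
  have e : f x + k * r - 1 = (f x - 1) + k * r := by ring
  rw [e, Int.add_mul_ediv_right (f x - 1) k (by exact_mod_cast hr.ne' : (r:ℤ) ≠ 0)]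

include hr hs_mem in
lemma Kf_zero_of_mem {y : ℤ} (hy : y ∈ s) : Kf r f y = 0 := by
  have h := (hs_mem y).mp hy
  exact Int.ediv_eq_zero_of_lt (by omega) (by omega)

include hr hf_per in
lemma x0_add (k x : ℤ) : (x + k * m) - Kf r f (x + k * m) * m = x - Kf r f x * m := by
  rw [Kf_add hr hf_per]
  ring

include hr hs_mem hwt in
lemma S_card (i : Fin r) : (s.filter (fun z => f z = (i.val:ℤ) + 1)).card = w i := by
  have e : {x : ℤ | f x = (i.val:ℤ) + 1} = ↑(s.filter (fun z => f z = (i.val:ℤ) + 1)) := by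
    ext x
    simp only [Set.mem_setOf_eq, Finset.mem_coe, Finset.mem_filter, hs_mem]
    have := i.isLt
    constructor
    · intro h
      refine ⟨⟨by omega, by omega⟩, h⟩
    · intro h
      exact h.2
  rw [← hwt i, e, Set.ncard_coe_finset]

include hr hs_mem hwt in
lemma count_lt : ∀ i : ℕ, i ≤ r →
    (((s.filter (fun z => f z < (i:ℤ) + 1)).card : ℤ)) = Wn w i := by
  intro i
  induction i with
  | zero =>
    intro _
    rw [Wn_zero]
    norm_num
    intro z hz
    have := (hs_mem z).mp hz
    omega
  | succ i ih =>
    intro hi1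
    have hi : i < r := by omega
    have e1 : s.filter (fun z => f z < ((i:ℕ)+1:ℕ) + 1) =
        (s.filter (fun z => f z < (i:ℤ) + 1)) ∪ (s.filter (fun z => f z = (i:ℤ) + 1)) := by
      rw [← Finset.filter_or]
      apply Finset.filter_congr
      intro z _
      push_cast
      constructor
      · intro h; omega
      · intro h; omega
    have hdisj : Disjoint (s.filter (fun z => f z < (i:ℤ) + 1)) (s.filter (fun z => f z = (i:ℤ) + 1)) := by
      rw [Finset.disjoint_left]
      intro z h1 h2
      rw [Finset.mem_filter] at h1 h2
      omega
    rw [e1, Finset.card_union_of_disjoint hdisj, Wn_succ w hi]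
    push_cast
    rw [ih (by omega)]
    have := S_card hr hs_mem hwt (⟨i, hi⟩ : Fin r)
    simp only [this]

include hr hs_mem in
lemma fiber_of_mem {y : ℤ} (hy : y ∈ s) : ∃ i : Fin r, f y = (i.val:ℤ) + 1 := by
  have h := (hs_mem y).mp hy
  refine ⟨⟨(f y - 1).toNat, by omega⟩, by simp only []; omega⟩

include hr hs_mem hwt in
lemma R_fiber {i : Fin r} {y : ℤ} (hy : y ∈ s) (hfy : f y = (i.val:ℤ) + 1) :
    Rf f s y = Wn w i.val +
      ((((s.filter (fun z => f z = (i.val:ℤ) + 1)).filter (fun z => z ≤ y)).card : ℤ)) := by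
  unfold Rf
  have e : s.filter (fun z => f z < f y ∨ (f z = f y ∧ z ≤ y)) =
      (s.filter (fun z => f z < (i.val:ℤ) + 1)) ∪
        ((s.filter (fun z => f z = (i.val:ℤ) + 1)).filter (fun z => z ≤ y)) := by
    rw [Finset.filter_filter, ← Finset.filter_or]
    apply Finset.filter_congr
    intro z _
    rw [hfy]
  have hdisj : Disjoint (s.filter (fun z => f z < (i.val:ℤ) + 1))
      ((s.filter (fun z => f z = (i.val:ℤ) + 1)).filter (fun z => z ≤ y)) := by
    rw [Finset.disjoint_left]
    intro z h1 h2
    rw [Finset.mem_filter] at h1 h2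
    rw [Finset.mem_filter] at h2
    omega
  rw [e, Finset.card_union_of_disjoint hdisj]
  push_cast
  rw [count_lt hr hs_mem hwt i.val (le_of_lt i.isLt)]


variable (hw : (∑ i, w i) = m)

include hr hs_mem hwt in
lemma R_bounds {i : Fin r} {y : ℤ} (hy : y ∈ s) (hfy : f y = (i.val:ℤ) + 1) :
    Wn w i.val < Rf f s y ∧ Rf f s y ≤ Wn w (i.val + 1) := by
  rw [R_fiber hr hs_mem hwt hy hfy, Wn_succ w i.isLt]
  have hsub : (s.filter (fun z => f z = (i.val:ℤ) + 1)).filter (fun z => z ≤ y) ⊆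
      s.filter (fun z => f z = (i.val:ℤ) + 1) := Finset.filter_subset _ _
  have hub : ((s.filter (fun z => f z = (i.val:ℤ) + 1)).filter (fun z => z ≤ y)).card ≤ w i := by
    rw [← S_card hr hs_mem hwt i]
    exact Finset.card_le_card hsub
  have hlb : 0 < ((s.filter (fun z => f z = (i.val:ℤ) + 1)).filter (fun z => z ≤ y)).card := by
    apply Finset.card_pos.mpr
    exact ⟨y, Finset.mem_filter.mpr ⟨Finset.mem_filter.mpr ⟨hy, hfy⟩, le_rfl⟩⟩
  have : w (⟨i.val, i.isLt⟩ : Fin r) = w i := by congr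
  omega

lemma R_strictmono {y y' : ℤ} (hy : y ∈ s) (hy' : y' ∈ s) (hf : f y = f y')
    (hlt : y < y') : Rf f s y < Rf f s y' := by
  unfold Rf
  have hss : (s.filter (fun z => f z < f y ∨ (f z = f y ∧ z ≤ y))) ⊂
      (s.filter (fun z => f z < f y' ∨ (f z = f y' ∧ z ≤ y'))) := by
    constructor
    · intro z hz
      rw [Finset.mem_filter] at *
      refine ⟨hz.1, ?_⟩
      rcases hz.2 with h|h
      · left; omega
      · right; exact ⟨by omega, by omega⟩
    · intro hsub
      have : y' ∈ s.filter (fun z => f z < f y ∨ (f z = f y ∧ z ≤ y)) := by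
        apply hsub
        rw [Finset.mem_filter]
        exact ⟨hy', Or.inr ⟨rfl, le_rfl⟩⟩
      rw [Finset.mem_filter] at this
      rcases this.2 with h|h <;> omega
  exact_mod_cast Finset.card_lt_card hss

lemma R_lt_of_flt {y y' : ℤ} (hy : y ∈ s) (hy' : y' ∈ s) (hf : f y < f y') :
    Rf f s y < Rf f s y' := by
  unfold Rf
  have hss : (s.filter (fun z => f z < f y ∨ (f z = f y ∧ z ≤ y))) ⊂
      (s.filter (fun z => f z < f y' ∨ (f z = f y' ∧ z ≤ y'))) := by
    constructor
    · intro z hz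
      rw [Finset.mem_filter] at *
      refine ⟨hz.1, Or.inl ?_⟩
      rcases hz.2 with h|h <;> omega
    · intro hsub
      have : y' ∈ s.filter (fun z => f z < f y ∨ (f z = f y ∧ z ≤ y)) := by
        apply hsub
        rw [Finset.mem_filter]
        exact ⟨hy', Or.inr ⟨rfl, le_rfl⟩⟩
      rw [Finset.mem_filter] at this
      rcases this.2 with h|h <;> omega
  exact_mod_cast Finset.card_lt_card hss

lemma R_inj {y y' : ℤ} (hy : y ∈ s) (hy' : y' ∈ s) (h : Rf f s y = Rf f s y') :
    y = y' := by
  rcases lt_trichotomy (f y) (f y') with hf|hf|hf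
  · exact absurd h (ne_of_lt (R_lt_of_flt hy hy' hf))
  · rcases lt_trichotomy y y' with h2|h2|h2
    · exact absurd h (ne_of_lt (R_strictmono hy hy' hf h2))
    · exact h2
    · exact absurd h.symm (ne_of_lt (R_strictmono hy' hy hf.symm h2))
  · exact absurd h.symm (ne_of_lt (R_lt_of_flt hy' hy hf))

include hr hw hs_mem hwt in
lemma R_mem {y : ℤ} (hy : y ∈ s) : 1 ≤ Rf f s y ∧ Rf f s y ≤ m := by
  obtain ⟨i, hfy⟩ := fiber_of_mem hr hs_mem hy
  have hb := R_bounds hr hs_mem hwt hy hfy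
  have h1 := Wn_nonneg w i.val
  have h2 : Wn w (i.val + 1) ≤ Wn w r := Wn_mono w i.isLt
  rw [Wn_top hw le_rfl] at h2
  omega

include hm hr hw hs_mem hs_card hwt in
lemma R_image : s.image (Rf f s) = Finset.Icc (1:ℤ) m := by
  apply Finset.eq_of_subset_of_card_le
  · intro u hu
    rcases Finset.mem_image.mp hu with ⟨y, hy, rfl⟩
    exact Finset.mem_Icc.mpr (R_mem hr hs_mem hwt hw hy)
  · rw [Finset.card_image_of_injOn (fun y hy y' hy' h => R_inj hy hy' h), hs_card,
      Int.card_Icc]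
    simp


include hm hr hf_per in
lemma sigmaF_add (k x : ℤ) : sigmaF m r f s (x + k * m) = sigmaF m r f s x + k * m := by
  unfold sigmaF
  rw [x0_add hr hf_per, Kf_add hr hf_per]
  ring

include hr hs_mem in
lemma sigmaF_on_s {y : ℤ} (hy : y ∈ s) : sigmaF m r f s y = Rf f s y := by
  unfold sigmaF
  rw [Kf_zero_of_mem hr hs_mem hy]
  simp

include hm hr hf_per hs_mem hs_card hwt hw in
lemma sigmaF_bij : Function.Bijective (sigmaF m r f s) := by
  constructor
  · intro x y hxy
    unfold sigmaF at hxy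
    have hx0 := x0_mem hm hr hf_per hs_mem x
    have hy0 := x0_mem hm hr hf_per hs_mem y
    have hbx := R_mem hr hs_mem hwt hw hx0
    have hby := R_mem hr hs_mem hwt hw hy0
    have hK : Kf r f x = Kf r f y := by
      rcases lt_trichotomy (Kf r f x) (Kf r f y) with h|h|h
      · exfalso
        have : (Kf r f x + 1) * (m:ℤ) ≤ Kf r f y * m :=
          mul_le_mul_of_nonneg_right (by omega) (by positivity)
        nlinarith
      · exact h
      · exfalso
        have : (Kf r f y + 1) * (m:ℤ) ≤ Kf r f x * m :=
          mul_le_mul_of_nonneg_right (by omega) (by positivity)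
        nlinarith
    rw [hK] at hxy
    have hR : Rf f s (x - Kf r f x * m) = Rf f s (y - Kf r f y * m) := by
      rw [hK]; omega
    have h5 := R_inj hx0 hy0 hR
    have h6 : Kf r f x * (m:ℤ) = Kf r f y * m := by rw [hK]
    omega
  · intro z
    have hmz : (0:ℤ) < m := by exact_mod_cast hm
    have h1 := Int.mul_ediv_add_emod (z - 1) m
    have h2 := Int.emod_nonneg (z - 1) (by omega : (m:ℤ) ≠ 0)
    have h3 := Int.emod_lt_of_pos (z - 1) hmz
    have hz0 : (z - 1) % m + 1 ∈ Finset.Icc (1:ℤ) m := Finset.mem_Icc.mpr ⟨by omega, by omega⟩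
    rw [← R_image hm hr hs_mem hs_card hwt hw] at hz0
    rcases Finset.mem_image.mp hz0 with ⟨y, hy, hRy⟩
    refine ⟨y + ((z - 1) / m) * m, ?_⟩
    rw [sigmaF_add hm hr hf_per, sigmaF_on_s hr hs_mem hy, hRy]
    have h4 : (m:ℤ) * ((z-1)/m) = ((z-1)/m) * m := mul_comm _ _
    linarith

include hm hr hf_per hs_mem hwt in
lemma sigmaF_comp_eq {fw : ℤ → ℤ}
    (hfw_per : ∀ x : ℤ, fw (x + m) = fw x + r)
    (hfw_val : ∀ i : Fin r, ∀ x : ℤ,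
      (∑ j ∈ Finset.univ.filter (fun j : Fin r => j.val < i.val), (w j : ℤ)) < x →
      x ≤ (∑ j ∈ Finset.univ.filter (fun j : Fin r => j.val ≤ i.val), (w j : ℤ)) →
      fw x = i.val + 1)
    (x : ℤ) : fw (sigmaF m r f s x) = f x := by
  have hx0 := x0_mem hm hr hf_per hs_mem x
  obtain ⟨i, hfy⟩ := fiber_of_mem hr hs_mem hx0
  have hb := R_bounds hr hs_mem hwt hx0 hfy
  unfold sigmaF
  rw [per_mul hfw_per (Kf r f x) (Rf f s (x - Kf r f x * m)),
    fwv hfw_val i _ hb.1 hb.2]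
  have := f_x0 hr hf_per x
  omega

include hm hr hf_per hs_mem hwt in
lemma sigmaF_minrep {fw : ℤ → ℤ}
    (hfw_per : ∀ x : ℤ, fw (x + m) = fw x + r)
    (hfw_val : ∀ i : Fin r, ∀ x : ℤ,
      (∑ j ∈ Finset.univ.filter (fun j : Fin r => j.val < i.val), (w j : ℤ)) < x →
      x ≤ (∑ j ∈ Finset.univ.filter (fun j : Fin r => j.val ≤ i.val), (w j : ℤ)) →
      fw x = i.val + 1)
    (a b : ℤ) (h1 : fw (sigmaF m r f s a) = fw (sigmaF m r f s b))
    (h2 : sigmaF m r f s a < sigmaF m r f s b) : a < b := by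
  rw [sigmaF_comp_eq hm hr hf_per hs_mem hwt hfw_per hfw_val,
    sigmaF_comp_eq hm hr hf_per hs_mem hwt hfw_per hfw_val] at h1
  have hK : Kf r f a = Kf r f b := by unfold Kf; rw [h1]
  have hfa : f (a - Kf r f a * m) = f (b - Kf r f b * m) := by
    rw [f_x0 hr hf_per, f_x0 hr hf_per, h1, hK]
  have ha0 := x0_mem hm hr hf_per hs_mem a
  have hb0 := x0_mem hm hr hf_per hs_mem b
  unfold sigmaF at h2
  rw [hK] at h2
  have hRlt : Rf f s (a - Kf r f a * m) < Rf f s (b - Kf r f b * m) := by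
    rw [hK]; omega
  have : a - Kf r f a * m < b - Kf r f b * m := by
    by_contra hc
    push_neg at hc
    rcases eq_or_lt_of_le hc with h|h
    · rw [h] at hRlt; omega
    · exact absurd hRlt (not_lt.mpr (le_of_lt (R_strictmono hb0 ha0 hfa.symm h)))
  have hKm : Kf r f a * (m:ℤ) = Kf r f b * m := by rw [hK]
  omega

end Comp

lemma transfer {m : ℕ} (hm : 0 < m) {d : ℤ → ℤ} (hd : ∀ (k x : ℤ), d (x + k * m) = d x)
    {A : Finset ℤ} (hA : A.card = m)
    (hdist : ∀ x ∈ A, ∀ y ∈ A, x % m = y % m → x = y) :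
    ∑ x ∈ A, d x = ∑ x ∈ Finset.Icc (1:ℤ) m, d x := by
  have hmz : (0:ℤ) < m := by exact_mod_cast hm
  set φ : ℤ → ℤ := fun z => (z - 1) % m + 1 with hφ
  have hφeq : ∀ z, φ z = z + (-((z - 1) / m)) * m := by
    intro z
    have h1 := Int.mul_ediv_add_emod (z - 1) m
    have h4 : (m:ℤ) * ((z-1)/m) = ((z-1)/m) * m := mul_comm _ _
    simp only [hφ]
    linarith
  have hdφ : ∀ z, d (φ z) = d z := by
    intro z
    rw [hφeq, hd]
  have hφmod : ∀ z, φ z % m = z % m := by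
    intro z
    rw [Int.emod_eq_emod_iff_emod_sub_eq_zero]
    have e : φ z - z = -((z - 1) / m) * m := by rw [hφeq]; ring
    rw [e, Int.mul_emod_left]
  have hφmem : ∀ z, φ z ∈ Finset.Icc (1:ℤ) m := by
    intro z
    have h2 := Int.emod_nonneg (z - 1) (ne_of_gt hmz)
    have h3 := Int.emod_lt_of_pos (z - 1) hmz
    refine Finset.mem_Icc.mpr ⟨?_, ?_⟩ <;> simp only [hφ] <;> omega
  have hinj : ∀ x ∈ A, ∀ y ∈ A, φ x = φ y → x = y := by
    intro x hx y hy h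
    apply hdist x hx y hy
    rw [← hφmod x, ← hφmod y, h]
  have himg : A.image φ = Finset.Icc (1:ℤ) m := by
    apply Finset.eq_of_subset_of_card_le
    · intro u hu
      rcases Finset.mem_image.mp hu with ⟨z, _, rfl⟩
      exact hφmem z
    · rw [Finset.card_image_of_injOn (fun x hx y hy h => hinj x hx y hy h), hA, Int.card_Icc]
      simp
  rw [← himg, Finset.sum_image hinj]
  exact Finset.sum_congr rfl (fun z _ => (hdφ z).symm)

section Comp2

variable {m r : ℕ} {w : Fin r → ℕ} {f : ℤ → ℤ} {s : Finset ℤ}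
variable (hm : 0 < m) (hr : 0 < r)
variable (hf_per : ∀ x : ℤ, f (x + m) = f x + r)
variable (hs_mem : ∀ x : ℤ, x ∈ s ↔ 1 ≤ f x ∧ f x ≤ r)
variable (hs_card : s.card = m)
variable (hs_dist : ∀ x ∈ s, ∀ y ∈ s, x % m = y % m → x = y)
variable (hs_sum : 2 * (∑ x ∈ s, x) = m * (m + 1))
variable (hwt : ∀ i : Fin r, Set.ncard {x : ℤ | f x = i.val + 1} = w i)
variable (hw : (∑ i, w i) = m)

include hm hr hf_per hs_mem hs_card hs_dist hs_sum hwt hw in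
lemma sigmaF_sum : 2 * (∑ x ∈ Finset.Icc (1:ℤ) m, sigmaF m r f s x) = m * (m + 1) := by
  set d : ℤ → ℤ := fun x => sigmaF m r f s x - x with hd
  have hdper : ∀ (k x : ℤ), d (x + k * m) = d x := by
    intro k x
    simp only [hd]
    rw [sigmaF_add hm hr hf_per]
    ring
  have htr := transfer hm hdper hs_card hs_dist
  have himg : ∑ z ∈ Finset.Icc (1:ℤ) m, z = ∑ y ∈ s, Rf f s y := by
    rw [← R_image hm hr hs_mem hs_card hwt hw]
    exact Finset.sum_image (fun x hx y hy h => R_inj hx hy h)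
  have hσR : ∑ y ∈ s, sigmaF m r f s y = ∑ y ∈ s, Rf f s y :=
    Finset.sum_congr rfl (fun y hy => sigmaF_on_s hr hs_mem hy)
  have e1 : ∑ x ∈ s, d x = (∑ x ∈ s, sigmaF m r f s x) - ∑ x ∈ s, x := by
    simp only [hd]
    rw [Finset.sum_sub_distrib]
  have e2 : ∑ x ∈ Finset.Icc (1:ℤ) m, d x =
      (∑ x ∈ Finset.Icc (1:ℤ) m, sigmaF m r f s x) - ∑ x ∈ Finset.Icc (1:ℤ) m, x := by
    simp only [hd]
    rw [Finset.sum_sub_distrib]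
  have hg := gauss m
  linarith

include hm hr hf_per hs_mem hs_card hwt hw in
lemma sigmaF_stable {fw : ℤ → ℤ} {n : ℕ} (hn : 0 < n)
    (hfw_per : ∀ x : ℤ, fw (x + m) = fw x + r)
    (hfw_val : ∀ i : Fin r, ∀ x : ℤ,
      (∑ j ∈ Finset.univ.filter (fun j : Fin r => j.val < i.val), (w j : ℤ)) < x →
      x ≤ (∑ j ∈ Finset.univ.filter (fun j : Fin r => j.val ≤ i.val), (w j : ℤ)) →
      fw x = i.val + 1)
    (hstab : ∀ x : ℤ, f x ≤ f (x + n)) :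
    ∀ x : ℤ, sigmaF m r f s x < sigmaF m r f s (x + n) := by
  intro x
  rcases eq_or_lt_of_le (hstab x) with heq|hlt
  · have hK : Kf r f (x + n) = Kf r f x := by unfold Kf; rw [← heq]
    have hx0 := x0_mem hm hr hf_per hs_mem x
    have hx0' := x0_mem hm hr hf_per hs_mem (x + n)
    have e : (x + n) - Kf r f (x + n) * m = (x - Kf r f x * m) + n := by
      rw [hK]; ring
    rw [e] at hx0'
    have hfeq : f (x - Kf r f x * m) = f ((x - Kf r f x * m) + n) := by
      have h1 := f_x0 hr hf_per x
      have h2 := f_x0 hr hf_per (x + n)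
      rw [e, hK] at h2
      omega
    have hR := R_strictmono hx0 hx0' hfeq (by omega)
    unfold sigmaF
    rw [e, hK]
    omega
  · by_contra hc
    push_neg at hc
    have hmono := fw_mono hm hr hw hfw_per hfw_val _ _ hc
    rw [sigmaF_comp_eq hm hr hf_per hs_mem hwt hfw_per hfw_val,
      sigmaF_comp_eq hm hr hf_per hs_mem hwt hfw_per hfw_val] at hmono
    omega

include hm hr hf_per hs_mem hs_card hwt hw in
lemma sigma_unique {fw : ℤ → ℤ} {σ : ℤ → ℤ}
    (hfw_per : ∀ x : ℤ, fw (x + m) = fw x + r)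
    (hfw_val : ∀ i : Fin r, ∀ x : ℤ,
      (∑ j ∈ Finset.univ.filter (fun j : Fin r => j.val < i.val), (w j : ℤ)) < x →
      x ≤ (∑ j ∈ Finset.univ.filter (fun j : Fin r => j.val ≤ i.val), (w j : ℤ)) →
      fw x = i.val + 1)
    (hσ_per : ∀ x : ℤ, σ (x + m) = σ x + m)
    (hσ_inj : Function.Injective σ)
    (hσ_min : ∀ a b : ℤ, fw (σ a) = fw (σ b) → σ a < σ b → a < b)
    (hcomp : ∀ x : ℤ, fw (σ x) = f x) :
    ∀ x : ℤ, σ x = sigmaF m r f s x := by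
  have stepB : ∀ y ∈ s, σ y = Rf f s y := by
    intro y hy
    obtain ⟨i, hfy⟩ := fiber_of_mem hr hs_mem hy
    have hcard : (s.filter (fun z => f z = (i.val:ℤ) + 1)).card =
        (Finset.Ioc (Wn w i.val) (Wn w (i.val + 1))).card := by
      rw [S_card hr hs_mem hwt i, Int.card_Ioc, Wn_succ w i.isLt]
      simp
    have hmaps : ∀ z ∈ s.filter (fun z => f z = (i.val:ℤ) + 1),
        σ z ∈ Finset.Ioc (Wn w i.val) (Wn w (i.val + 1)) := by
      intro z hz
      rw [Finset.mem_filter] at hz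
      have : fw (σ z) = (i.val:ℤ) + 1 := by rw [hcomp]; exact hz.2
      exact Finset.mem_Ioc.mpr ((fw_fiber_iff hm hr hw hfw_per hfw_val i (σ z)).mp this)
    have hmono : ∀ y₁ ∈ s.filter (fun z => f z = (i.val:ℤ) + 1),
        ∀ z ∈ s.filter (fun z => f z = (i.val:ℤ) + 1), y₁ < z → σ y₁ < σ z := by
      intro y₁ hy₁ z hz hlt
      rw [Finset.mem_filter] at hy₁ hz
      have hfweq : fw (σ z) = fw (σ y₁) := by rw [hcomp, hcomp, hy₁.2, hz.2]
      rcases lt_trichotomy (σ y₁) (σ z) with h|h|h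
      · exact h
      · exact absurd (hσ_inj h) (ne_of_lt hlt)
      · exact absurd (hσ_min z y₁ hfweq h) (by omega)
    have := rank_formula hcard hmaps hmono y (Finset.mem_filter.mpr ⟨hy, hfy⟩)
    rw [this, R_fiber hr hs_mem hwt hy hfy]
  intro x
  have hx0 := x0_mem hm hr hf_per hs_mem x
  have hper := per_mul hσ_per (Kf r f x) (x - Kf r f x * m)
  rw [sub_add_cancel] at hper
  rw [hper, stepB _ hx0]
  rfl

end Comp2

lemma kzero {m : ℕ} (hm : 0 < m) {k a b : ℤ} (ha : 1 ≤ a) (ha2 : a ≤ m)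
    (hb : 1 ≤ b) (hb2 : b ≤ m) (h : a = b + k * m) : k = 0 := by
  rcases lt_trichotomy k 0 with hk|hk|hk
  · exfalso
    have : k * (m:ℤ) ≤ (-1) * m := mul_le_mul_of_nonneg_right (by omega) (by positivity)
    nlinarith
  · exact hk
  · exfalso
    have : 1 * (m:ℤ) ≤ k * m := mul_le_mul_of_nonneg_right (by omega) (by positivity)
    nlinarith

end

/-- The bijection `σ ↦ fw ∘ σ` between minimal-length coset representatives
and weight-`w` affine compositions restricts to a bijection between the
`n`-stable minimal-length representatives (those with `σ(x) < σ(x+n)` for all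
`x`) and the `n`-stable affine compositions of weight `w` (those with
`f(x) ≤ f(x+n)` for all `x`). -/
theorem min_coset_reps_biject_affine_comps_stable (m r n : ℕ)
    (hm : 0 < m) (hr : 0 < r) (hn : 0 < n)
    (w : Fin r → ℕ) (hw : (∑ i, w i) = m)
    (fw : ℤ → ℤ)
    (hfw_per : ∀ x : ℤ, fw (x + m) = fw x + r)
    (hfw_val : ∀ i : Fin r, ∀ x : ℤ,
      (∑ j ∈ Finset.univ.filter (fun j : Fin r => j.val < i.val), (w j : ℤ)) < x →
      x ≤ (∑ j ∈ Finset.univ.filter (fun j : Fin r => j.val ≤ i.val), (w j : ℤ)) →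
      fw x = i.val + 1) :
    Set.BijOn (fun σ => fw ∘ σ)
      ({σ : ℤ → ℤ | IsAffinePerm m σ ∧
          ∀ s t : ℤ, fw (σ s) = fw (σ t) → σ s < σ t → s < t} ∩
        {σ : ℤ → ℤ | ∀ x : ℤ, σ x < σ (x + n)})
      ({f : ℤ → ℤ | IsAffineComp m r f ∧
          ∀ i : Fin r, Set.ncard {x : ℤ | f x = i.val + 1} = w i} ∩
        {f : ℤ → ℤ | ∀ x : ℤ, f x ≤ f (x + n)}) := by
  have hMaps : Set.MapsTo (fun σ => fw ∘ σ)
      ({σ : ℤ → ℤ | IsAffinePerm m σ ∧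
          ∀ s t : ℤ, fw (σ s) = fw (σ t) → σ s < σ t → s < t} ∩
        {σ : ℤ → ℤ | ∀ x : ℤ, σ x < σ (x + n)})
      ({f : ℤ → ℤ | IsAffineComp m r f ∧
          ∀ i : Fin r, Set.ncard {x : ℤ | f x = i.val + 1} = w i} ∩
        {f : ℤ → ℤ | ∀ x : ℤ, f x ≤ f (x + n)}) := by
    rintro σ ⟨⟨⟨hbij, hper, hsum⟩, hmin⟩, hstab⟩
    obtain ⟨g, hg1, hg2⟩ := Function.bijective_iff_has_inverse.mp hbij
    have σmul := per_mul hper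
    have ginj : Function.Injective g := fun a b h => by rw [← hg2 a, ← hg2 b, h]
    set S : Finset ℤ := (Finset.Icc (1:ℤ) m).image g with hS
    have hmemS : ∀ x : ℤ, x ∈ S ↔ 1 ≤ fw (σ x) ∧ fw (σ x) ≤ r := by
      intro x
      rw [fw_window_iff hm hr hw hfw_per hfw_val (σ x)]
      constructor
      · intro hx
        rcases Finset.mem_image.mp hx with ⟨y, hy, rfl⟩
        rw [hg2 y]
        have := Finset.mem_Icc.mp hy
        omega
      · intro hx
        exact Finset.mem_image.mpr ⟨σ x, Finset.mem_Icc.mpr ⟨by omega, by omega⟩, hg1 x⟩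
    have hcardS : S.card = m := by
      rw [hS, Finset.card_image_of_injective _ ginj, Int.card_Icc]
      simp
    have hbound : ∀ x ∈ S, 1 ≤ σ x ∧ σ x ≤ m := by
      intro x hx
      have h1 := (hmemS x).mp hx
      have h2 := (fw_window_iff hm hr hw hfw_per hfw_val (σ x)).mp h1
      omega
    have hdistS : ∀ x ∈ S, ∀ y ∈ S, x % m = y % m → x = y := by
      intro x hx y hy hmod
      rw [Int.emod_eq_emod_iff_emod_sub_eq_zero] at hmod
      obtain ⟨k, hk⟩ := Int.dvd_of_emod_eq_zero hmod
      have hx' : x = y + k * m := by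
        have := mul_comm (m:ℤ) k
        linarith [hk]
      have hσ' : σ x = σ y + k * m := by rw [hx', σmul k y]
      have hbx := hbound x hx
      have hby := hbound y hy
      have hk0 : k = 0 := kzero hm hbx.1 hbx.2 hby.1 hby.2 hσ'
      rw [hk0] at hx'
      simpa using hx'
    have hsumS : 2 * (∑ x ∈ S, x) = m * (m + 1) := by
      have hσS : ∑ x ∈ S, σ x = ∑ y ∈ Finset.Icc (1:ℤ) m, y := by
        rw [hS, Finset.sum_image (fun a _ b _ h => ginj h)]
        exact Finset.sum_congr rfl (fun y _ => by rw [hg2 y])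
      set d : ℤ → ℤ := fun x => σ x - x with hd
      have hdper : ∀ (k x : ℤ), d (x + k * m) = d x := by
        intro k x
        simp only [hd]
        rw [σmul k x]
        ring
      have htr := transfer hm hdper hcardS hdistS
      have e1 : ∑ x ∈ S, d x = (∑ x ∈ S, σ x) - ∑ x ∈ S, x := by
        simp only [hd]; rw [Finset.sum_sub_distrib]
      have e2 : ∑ x ∈ Finset.Icc (1:ℤ) m, d x =
          (∑ x ∈ Finset.Icc (1:ℤ) m, σ x) - ∑ x ∈ Finset.Icc (1:ℤ) m, x := by
        simp only [hd]; rw [Finset.sum_sub_distrib]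
      have hg := gauss m
      linarith
    refine ⟨⟨⟨fun x => by simp only [Function.comp_apply]; rw [hper, hfw_per],
      S, hmemS, hcardS, hdistS, hsumS⟩, ?_⟩, ?_⟩
    · intro i
      have hset : {x : ℤ | (fw ∘ σ) x = (i.val:ℤ) + 1} =
          ↑((Finset.Ioc (Wn w i.val) (Wn w (i.val+1))).image g) := by
        ext x
        simp only [Set.mem_setOf_eq, Function.comp_apply, Finset.coe_image, Set.mem_image,
          Finset.mem_coe, Finset.mem_Ioc]
        rw [fw_fiber_iff hm hr hw hfw_per hfw_val i (σ x)]
        constructor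
        · intro hx
          exact ⟨σ x, hx, hg1 x⟩
        · rintro ⟨u, hu, rfl⟩
          rw [hg2 u]
          exact hu
      rw [hset, Set.ncard_coe_finset, Finset.card_image_of_injective _ ginj, Int.card_Ioc,
        Wn_succ w i.isLt]
      simp
    · intro x
      exact fw_mono hm hr hw hfw_per hfw_val _ _ (le_of_lt (hstab x))
  refine ⟨hMaps, ?_, ?_⟩
  · intro σ hσA σ' hσ'A heq
    simp only at heq
    obtain ⟨⟨⟨hfper, s, hsmem, hscard, _, _⟩, hwtf⟩, _⟩ := hMaps hσA
    obtain ⟨⟨⟨hbij, hper, _⟩, hmin⟩, _⟩ := hσA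
    obtain ⟨⟨⟨hbij', hper', _⟩, hmin'⟩, _⟩ := hσ'A
    funext x
    have h1 := sigma_unique hm hr hfper hsmem hscard hwtf hw hfw_per hfw_val hper hbij.1
      hmin (fun _ => rfl) x
    have h2 := sigma_unique hm hr hfper hsmem hscard hwtf hw hfw_per hfw_val hper' hbij'.1
      hmin' (fun y => (congrFun heq y).symm) x
    rw [h1, h2]
  · intro f hf
    obtain ⟨⟨⟨hfper, s, hsmem, hscard, hsdist, hssum⟩, hwtf⟩, hstabf⟩ := hf
    refine ⟨sigmaF m r f s, ⟨⟨⟨?_, ?_, ?_⟩, ?_⟩, ?_⟩, ?_⟩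
    · exact sigmaF_bij hm hr hfper hsmem hscard hwtf hw
    · intro x
      have := sigmaF_add (s := s) hm hr hfper 1 x
      rw [one_mul] at this
      exact this
    · exact sigmaF_sum hm hr hfper hsmem hscard hsdist hssum hwtf hw
    · exact fun a b => sigmaF_minrep hm hr hfper hsmem hwtf hfw_per hfw_val a b
    · exact sigmaF_stable hm hr hfper hsmem hscard hwtf hw hn hfw_per hfw_val hstabf
    · funext x
      exact sigmaF_comp_eq hm hr hfper hsmem hwtf hfw_per hfw_val x
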